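/- arXiv:2303.08903 — 6 statements merged into one kernel-verified Lean document; each statement's English description precedes it below -/
import Mathlib

section
/- For f ∈ D_{L,x} and u ∈ L^×, the reduced norm is preserved by the isomorphism γ_u : D_{L,x} → D_{L,N_{L/K}(u)^{-1}x} sending T to uT; i.e., Nrd(f) = Nrd(γ_u(f)). -/
/-- The matrix `M_f` of right multiplication by `f = a₀ + a₁T + ⋯ + a_{r−1}T^{r−1}`
on `D_{L,x} = L[T;Φ]/(T^r − x)` in the `L`-basis `(1, T, …, T^{r-1})`; its
determinant is the reduced norm `Nrd(f)`. -/
noncomputable def oreMatrix {L : Type*} [CommRing L] (r : ℕ) (Φ : L → L) (x : L)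
    (a : Fin r → L) : Matrix (Fin r) (Fin r) L :=
  Matrix.of fun u v =>
    if h : v.val ≤ u.val then
      Φ^[v.val] (a ⟨u.val - v.val, by have := u.isLt; omega⟩)
    else
      x * Φ^[v.val] (a ⟨u.val + r - v.val, by have := u.isLt; have := v.isLt; omega⟩)

/-- The map `γ_u : D_{L,x} → D_{L,v⁻¹x}` sending `Σ aᵢTⁱ` to `Σ aᵢ·u·Φ(u)⋯Φ^{i-1}(u)·Tⁱ`,
i.e. the ring morphism determined by `T ↦ uT`. -/
noncomputable def oreGamma {L : Type*} [CommRing L] (r : ℕ) (Φ : L → L) (u : L)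
    (f : Fin r → L) : Fin r → L :=
  fun i => f i * ∏ t ∈ Finset.range i.val, Φ^[t] u

/-- the reduced norm is preserved by the isomorphism
`γ_u : D_{L,x} → D_{L,N_{L/K}(u)⁻¹x}`, i.e. `Nrd(f) = Nrd(γ_u(f))`. -/
theorem stmt_6 (K L : Type*) [Field K] [CommRing L] [Algebra K L]
    (r : ℕ) (hr : 0 < r) (Φ : L ≃ₐ[K] L) (hord : orderOf Φ = r)
    (hfix : ∀ a : L, Φ a = a ↔ a ∈ Set.range (algebraMap K L))
    (x : K) (hx : x ≠ 0) (u : Lˣ) (v : Kˣ)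
    (hv : algebraMap K L v = ∏ i ∈ Finset.range r, (⇑Φ)^[i] (u : L))
    (a : Fin r → L) :
    (oreMatrix r ⇑Φ (algebraMap K L x) a).det
      = (oreMatrix r ⇑Φ (algebraMap K L ((↑(v⁻¹) : K) * x)) (oreGamma r ⇑Φ (u : L) a)).det := by
  have hcoe : ∀ n : ℕ, (⇑Φ)^[n] = ⇑(Φ ^ n) :=
    fun n => (hom_coe_pow (fun (e : L ≃ₐ[K] L) => ⇑e) rfl (fun _ _ => rfl) Φ n).symm
  have hiter_r : ∀ y : L, (⇑Φ)^[r] y = y := by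
    intro y
    rw [hcoe, ← hord, pow_orderOf_eq_one Φ]
    rfl
  set P : ℕ → L := fun m => ∏ t ∈ Finset.range m, (⇑Φ)^[t] (u : L) with hPdef
  set Q : ℕ → L := fun m => ∏ t ∈ Finset.range m, (⇑Φ)^[t] ((u⁻¹ : Lˣ) : L) with hQdef
  have hPQ : ∀ m, P m * Q m = 1 := by
    intro m
    rw [hPdef, hQdef]
    simp only
    rw [← Finset.prod_mul_distrib]
    apply Finset.prod_eq_one
    intro t _
    rw [← iterate_map_mul]
    simp
  have hΦP : ∀ j m, (⇑Φ)^[j] (P m) = ∏ t ∈ Finset.range m, (⇑Φ)^[j + t] (u : L) := by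
    intro j m
    rw [hPdef]
    simp only
    rw [hcoe j, map_prod]
    refine Finset.prod_congr rfl fun t _ => ?_
    rw [← hcoe j, ← Function.iterate_add_apply]
  have hPsplit : ∀ j m, P (j + m) = P j * (⇑Φ)^[j] (P m) := by
    intro j m
    rw [hΦP, hPdef]
    simp only
    rw [Finset.prod_range_add]
  have hPr : P r = algebraMap K L v := hv.symm
  -- key entrywise identity
  have key : oreMatrix r ⇑Φ (algebraMap K L ((↑(v⁻¹) : K) * x)) (oreGamma r ⇑Φ (u : L) a)
      = Matrix.diagonal (fun i : Fin r => P i.val) *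
        oreMatrix r ⇑Φ (algebraMap K L x) a *
        Matrix.diagonal (fun i : Fin r => Q i.val) := by
    ext i j
    rw [Matrix.mul_diagonal, Matrix.diagonal_mul]
    simp only [oreMatrix, oreGamma, Matrix.of_apply]
    split_ifs with h
    · -- j ≤ i
      rw [iterate_map_mul]
      have h1 : P i.val = P j.val * (⇑Φ)^[j.val] (P (i.val - j.val)) := by
        rw [← hPsplit]; congr 1; omega
      calc (⇑Φ)^[j.val] (a ⟨i.val - j.val, _⟩) * (⇑Φ)^[j.val] (P (i.val - j.val))
          = (⇑Φ)^[j.val] (a ⟨i.val - j.val, _⟩) * (⇑Φ)^[j.val] (P (i.val - j.val)) *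
            (P j.val * Q j.val) := by rw [hPQ]; ring
        _ = P i.val * (⇑Φ)^[j.val] (a ⟨i.val - j.val, _⟩) * Q j.val := by rw [h1]; ring
    · -- j > i
      rw [iterate_map_mul, map_mul]
      have h1 : P (i.val + r) = P j.val * (⇑Φ)^[j.val] (P (i.val + r - j.val)) := by
        rw [← hPsplit]; congr 1; omega
      have h2 : P (i.val + r) = P i.val * P r := by
        have hfix' : (⇑Φ)^[r] (P i.val) = P i.val := hiter_r _
        rw [Nat.add_comm, hPsplit r i.val, hfix', mul_comm]
      have h3 : (⇑Φ)^[j.val] (P (i.val + r - j.val)) = Q j.val * (P i.val * P r) := by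
        have := hPQ j.val
        calc (⇑Φ)^[j.val] (P (i.val + r - j.val))
            = (P j.val * Q j.val) * (⇑Φ)^[j.val] (P (i.val + r - j.val)) := by
              rw [this, one_mul]
          _ = Q j.val * P (i.val + r) := by rw [h1]; ring
          _ = Q j.val * (P i.val * P r) := by rw [h2]
      have h4 : algebraMap K L (↑(v⁻¹) : K) * P r = 1 := by
        rw [hPr, ← map_mul]
        norm_cast
        simp
      calc algebraMap K L (↑(v⁻¹) : K) * algebraMap K L x *
            ((⇑Φ)^[j.val] (a ⟨i.val + r - j.val, _⟩) *
              (⇑Φ)^[j.val] (P (i.val + r - j.val)))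
          = (algebraMap K L (↑(v⁻¹) : K) * P r) *
            (algebraMap K L x * (⇑Φ)^[j.val] (a ⟨i.val + r - j.val, _⟩) *
              (Q j.val * P i.val)) := by rw [h3]; ring
        _ = P i.val * (algebraMap K L x * (⇑Φ)^[j.val] (a ⟨i.val + r - j.val, _⟩)) *
            Q j.val := by rw [h4]; ring
  rw [key, Matrix.det_mul, Matrix.det_mul, Matrix.det_diagonal, Matrix.det_diagonal]
  have : (∏ i : Fin r, P i.val) * (∏ i : Fin r, Q i.val) = 1 := by
    rw [← Finset.prod_mul_distrib]
    exact Finset.prod_eq_one fun i _ => hPQ i.val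
  calc (oreMatrix r ⇑Φ (algebraMap K L x) a).det
      = (∏ i : Fin r, P i.val) * (oreMatrix r ⇑Φ (algebraMap K L x) a).det *
        (∏ i : Fin r, Q i.val) := by
        rw [show ∀ A B C : L, A * C * B = C * (A * B) from fun A B C => by ring, this, mul_one]
    _ = _ := rfl
end

section
/- Let L/K be a cyclic Galois field extension of degree r with Galois group generated by Φ, and let ε : D_{L,1} → End_K(L) be the isomorphism sending T to Φ. Then for every f ∈ D_{L,1}, the reduced norm Nrd(f) equals the determinant of the K-linear endomorphism ε(f) of L. -/
open Matrix

theorem det_algHom_basis_ne_zero {R A B ι : Type*} [CommRing R] [Ring A] [Algebra R A]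
    [Field B] [Algebra R B] [Fintype ι] [DecidableEq ι]
    (σ : ι → A →ₐ[R] B) (hσ : Function.Injective σ) (b : Module.Basis ι R A) :
    (Matrix.of fun j k => σ j (b k)).det ≠ 0 := by
  intro h
  obtain ⟨v, hv, hvσ⟩ := exists_vecMul_eq_zero_iff.mpr h
  have hsum : ∑ j, v j • (σ j).toLinearMap = 0 :=
    b.ext fun k => by simpa [vecMul, dotProduct] using congrFun hvσ k
  exact hv (funext <|
    Fintype.linearIndependent_iff.mp ((linearIndependent_toLinearMap R A B).comp σ hσ) v hsum)

section OreAlgebra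

variable {K L : Type*} [CommRing K] [CommRing L] [Algebra K L] {r : ℕ}

/-- The image `ε(a₀ + a₁T + ⋯ + a_{r-1}T^{r-1}) = ∑ aᵢ Φⁱ` under `ε : D_{L,1} → End_K(L)`. -/
noncomputable def oreToEnd (Φ : L ≃ₐ[K] L) (a : Fin r → L) : L →ₗ[K] L :=
  ∑ i : Fin r, LinearMap.mulLeft K (a i) ∘ₗ Φ.toLinearMap ^ i.val

theorem oreToEnd_apply (Φ : L ≃ₐ[K] L) (a : Fin r → L) (x : L) :
    oreToEnd Φ a x = ∑ i, a i * (Φ ^ i.val) x := by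
  simp [oreToEnd, Module.End.coe_pow, AlgEquiv.coe_pow]

noncomputable def conjugatesMatrix (Φ : L ≃ₐ[K] L) (v : Fin r → L) : Matrix (Fin r) (Fin r) L :=
  Matrix.of fun j k => (Φ ^ j.val) (v k)

theorem oreMatrix_one_add_apply [NeZero r] (Φ : L → L) (a : Fin r → L) (i j : Fin r) :
    oreMatrix r Φ 1 a (j + i) j = Φ^[j.val] (a i) := by
  have hji : ((j + i : Fin r) : ℕ) = ((j : ℕ) + (i : ℕ)) % r := Fin.val_add j i
  rcases lt_or_ge ((j : ℕ) + (i : ℕ)) r with hlt | hge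
  · rw [Nat.mod_eq_of_lt hlt] at hji
    simp only [oreMatrix, Matrix.of_apply, dif_pos (show j.val ≤ (j + i).val by omega)]
    congr 2; ext; simp only [hji]; omega
  · rw [Nat.mod_eq_sub_mod hge, Nat.mod_eq_of_lt (by omega)] at hji
    simp only [oreMatrix, Matrix.of_apply, dif_neg (show ¬ j.val ≤ (j + i).val by omega), one_mul]
    congr 2; ext; simp only [hji]; omega

theorem conjugatesMatrix_add_apply [NeZero r] {Φ : L ≃ₐ[K] L} (hΦ : Φ ^ r = 1)
    (v : Fin r → L) (i j k : Fin r) :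
    conjugatesMatrix Φ v (j + i) k = (Φ ^ j.val) ((Φ ^ i.val) (v k)) := by
  rw [conjugatesMatrix, Matrix.of_apply, Fin.val_add, ← pow_eq_pow_mod _ hΦ, pow_add,
    AlgEquiv.mul_apply]

theorem oreMatrix_transpose_mul_conjugatesMatrix [NeZero r] {Φ : L ≃ₐ[K] L} (hΦ : Φ ^ r = 1)
    (a : Fin r → L) (b : Module.Basis (Fin r) K L) :
    (oreMatrix r Φ 1 a)ᵀ * conjugatesMatrix Φ b
      = conjugatesMatrix Φ b * (LinearMap.toMatrix b b (oreToEnd Φ a)).map (algebraMap K L) := by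
  ext j k
  calc ((oreMatrix r Φ 1 a)ᵀ * conjugatesMatrix Φ b) j k
      = ∑ i, oreMatrix r Φ 1 a (j + i) j * conjugatesMatrix Φ b (j + i) k :=
        (Equiv.sum_comp (Equiv.addLeft j) _).symm
    _ = (Φ ^ j.val) (oreToEnd Φ a (b k)) := by
        simp only [oreMatrix_one_add_apply, conjugatesMatrix_add_apply hΦ, oreToEnd_apply,
          map_sum, map_mul, AlgEquiv.coe_pow]
    _ = (Φ ^ j.val) (∑ m, LinearMap.toMatrix b b (oreToEnd Φ a) m k • b m) := by
        simp only [LinearMap.toMatrix_apply, b.sum_repr]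
    _ = (conjugatesMatrix Φ b *
          (LinearMap.toMatrix b b (oreToEnd Φ a)).map (algebraMap K L)) j k := by
        simp only [map_sum, Algebra.smul_def, map_mul, AlgEquiv.commutes, mul_apply, map_apply,
          conjugatesMatrix, of_apply, mul_comm]

end OreAlgebra

theorem det_oreMatrix_one_eq_det_oreToEnd {K L : Type*} [Field K] [Field L] [Algebra K L]
    {r : ℕ} [NeZero r] {Φ : L ≃ₐ[K] L} (hΦ : orderOf Φ = r) (b : Module.Basis (Fin r) K L)
    (a : Fin r → L) :
    (oreMatrix r Φ 1 a).det = algebraMap K L (LinearMap.det (oreToEnd Φ a)) := by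
  have hinj : Function.Injective fun j : Fin r => (Φ ^ j.val).toAlgHom := fun i j hij =>
    Fin.ext <| pow_injOn_Iio_orderOf (hΦ ▸ i.isLt) (hΦ ▸ j.isLt)
      (AlgEquiv.coe_toAlgHom_injective hij)
  have hP : (conjugatesMatrix Φ b).det ≠ 0 := det_algHom_basis_ne_zero _ hinj b
  apply mul_right_cancel₀ hP
  rw [← det_transpose, ← det_mul, oreMatrix_transpose_mul_conjugatesMatrix
    (hΦ ▸ pow_orderOf_eq_one Φ), det_mul, mul_comm, ← RingHom.mapMatrix_apply, ← RingHom.map_det,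
    LinearMap.det_toMatrix]

theorem orderOf_eq_finrank_of_forall_mem_zpowers {K L : Type*} [Field K] [Field L] [Algebra K L]
    [FiniteDimensional K L] [IsGalois K L] {Φ : L ≃ₐ[K] L}
    (hΦ : ∀ σ : L ≃ₐ[K] L, σ ∈ Subgroup.zpowers Φ) : orderOf Φ = Module.finrank K L := by
  rw [orderOf_eq_card_of_forall_mem_zpowers hΦ, IsGalois.card_aut_eq_finrank]

/-- for `L/K` cyclic Galois of degree `r` generated by `Φ` and
`ε : D_{L,1} → End_K(L)` the isomorphism sending `T ↦ Φ`, the reduced norm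
`Nrd(f)` equals the determinant of the `K`-linear endomorphism `ε(f)`. -/
theorem stmt_7 (K L : Type*) [Field K] [Field L] [Algebra K L] [IsGalois K L]
    (r : ℕ) (hr : 0 < r) (hrk : Module.finrank K L = r)
    (Φ : L ≃ₐ[K] L) (hgen : ∀ σ : L ≃ₐ[K] L, σ ∈ Subgroup.zpowers Φ)
    (a : Fin r → L) :
    (oreMatrix r ⇑Φ (1 : L) a).det
      = algebraMap K L
          (LinearMap.det (∑ i : Fin r, (LinearMap.mulLeft K (a i)) ∘ₗ (Φ.toLinearMap ^ i.val))) := by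
  have : NeZero r := ⟨hr.ne'⟩
  have : FiniteDimensional K L := Module.finite_of_finrank_pos (hrk ▸ hr)
  exact det_oreMatrix_one_eq_det_oreToEnd (hrk ▸ orderOf_eq_finrank_of_forall_mem_zpowers hgen)
    (Module.finBasisOfFinrankEq K L hrk) a
end

section
/- Let K = k((t)), L/K an unramified cyclic Galois extension of degree r generated by Φ, and x ∈ K^× with gcd(v_t(x), r) = 1. Then the ring D_{L,x} = L[T;Φ]/(T^r − x) has no nonzero zero divisors: if f, g ∈ D_{L,x} are both nonzero then fg ≠ 0. -/
/-- Multiplication on `D_{L,x} = L[T;Φ]/(T^r − x)`, identified with `Fin r → L`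
via the basis `1, T, …, T^{r-1}`; the Ore rule is `T·a = Φ(a)·T`. -/
noncomputable def oreMul {L : Type*} [CommRing L] (r : ℕ) (Φ : L → L) (x : L)
    (f g : Fin r → L) : Fin r → L :=
  fun n => ∑ i : Fin r, ∑ j : Fin r,
    if (i.val + j.val) % r = n.val then
      (if i.val + j.val < r then f i * Φ^[i.val] (g j)
       else x * (f i * Φ^[i.val] (g j)))
    else 0

/-- Scaling by `r` on `WithTop ℤ`. -/
private def psi (r : ℕ) : WithTop ℤ → WithTop ℤ := WithTop.map (fun m => (r : ℤ) * m)

private lemma psi_top (r : ℕ) : psi r ⊤ = ⊤ := rfl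

private lemma psi_coe (r : ℕ) (m : ℤ) :
    psi r (m : WithTop ℤ) = (((r : ℤ) * m : ℤ) : WithTop ℤ) := rfl

private lemma coe_lt_iff_add_one_le {m : ℤ} {a : WithTop ℤ} (h : (m : WithTop ℤ) < a) :
    ((m + 1 : ℤ) : WithTop ℤ) ≤ a := by
  induction a using WithTop.recTopCoe with
  | top => exact le_top
  | coe k =>
    rw [WithTop.coe_lt_coe] at h
    exact WithTop.coe_le_coe.mpr (by omega)

private lemma le_v_sum {L : Type*} [Field L] (v : L → WithTop ℤ)
    (hv0 : ∀ a : L, v a = ⊤ ↔ a = 0)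
    (hvadd : ∀ a b : L, min (v a) (v b) ≤ v (a + b))
    {ι : Type*} [DecidableEq ι] (s : Finset ι) (F : ι → L) (c : WithTop ℤ)
    (h : ∀ i ∈ s, c ≤ v (F i)) : c ≤ v (∑ i ∈ s, F i) := by
  induction s using Finset.induction with
  | empty => simp [(hv0 0).mpr rfl]
  | @insert a s ha ih =>
    rw [Finset.sum_insert ha]
    refine le_trans (le_min (h a (by simp)) (ih fun i hi => h i (by simp [hi]))) (hvadd _ _)

private lemma sum_ne_zero_of_strict_min {L : Type*} [Field L] (v : L → WithTop ℤ)
    (hv0 : ∀ a : L, v a = ⊤ ↔ a = 0)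
    (hvadd : ∀ a b : L, min (v a) (v b) ≤ v (a + b))
    (hvneg : ∀ a : L, v (-a) = v a)
    {ι : Type*} [DecidableEq ι] (s : Finset ι) (F : ι → L) (p0 : ι) (hp0 : p0 ∈ s)
    (m : ℤ) (hm : v (F p0) = (m : WithTop ℤ))
    (hlt : ∀ p ∈ s, p ≠ p0 → (m : WithTop ℤ) < v (F p)) :
    ∑ p ∈ s, F p ≠ 0 := by
  intro h0
  have hadd := Finset.add_sum_erase s F hp0
  rw [h0] at hadd
  have hrest : F p0 = -∑ p ∈ s.erase p0, F p := eq_neg_of_add_eq_zero_left hadd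
  have hge : ((m + 1 : ℤ) : WithTop ℤ) ≤ v (∑ p ∈ s.erase p0, F p) := by
    refine le_v_sum v hv0 hvadd _ _ _ ?_
    intro p hp
    exact coe_lt_iff_add_one_le (hlt p (Finset.mem_of_mem_erase hp) (Finset.ne_of_mem_erase hp))
  rw [← hvneg, ← hrest, hm] at hge
  exact absurd (WithTop.coe_le_coe.mp hge) (by omega)

private lemma key_inj (r : ℕ) (hr : 0 < r) (n : ℤ) (hcop : Int.gcd n (r : ℤ) = 1)
    (i i' m m' : ℤ) (hi : 0 ≤ i) (hi2 : i < r) (hi' : 0 ≤ i') (hi'2 : i' < r)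
    (h : (r : ℤ) * m + n * i = (r : ℤ) * m' + n * i') : i = i' := by
  have hr0 : (0 : ℤ) < (r : ℤ) := by exact_mod_cast hr
  have hd : (r : ℤ) ∣ (i - i') * n := ⟨m' - m, by linear_combination h⟩
  have hdd : (r : ℤ) ∣ (i - i') :=
    Int.dvd_of_dvd_mul_left_of_gcd_one hd (by rw [Int.gcd_comm]; exact hcop)
  obtain ⟨c, hc⟩ := hdd
  rcases lt_trichotomy c 0 with h1 | h1 | h1
  · have : (r : ℤ) * c ≤ (r : ℤ) * (-1) := mul_le_mul_of_nonneg_left (by omega) (le_of_lt hr0)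
    linarith
  · rw [h1, mul_zero] at hc; linarith
  · have : (r : ℤ) * 1 ≤ (r : ℤ) * c := mul_le_mul_of_nonneg_left (by omega) (le_of_lt hr0)
    linarith

private lemma exists_strict_min (r : ℕ) (hr : 0 < r) (n : ℤ) (hcop : Int.gcd n (r : ℤ) = 1)
    (A : Fin r → WithTop ℤ)
    (hform : ∀ i : Fin r, A i ≠ ⊤ → ∃ m : ℤ, A i = (((r : ℤ) * m + n * i.val : ℤ) : WithTop ℤ))
    (i1 : Fin r) (h1 : A i1 ≠ ⊤) :
    ∃ i0 : Fin r, A i0 ≠ ⊤ ∧ ∀ i : Fin r, i ≠ i0 → A i0 < A i := by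
  obtain ⟨i0, -, hmin⟩ := Finset.exists_min_image Finset.univ A ⟨i1, Finset.mem_univ i1⟩
  have h0 : A i0 ≠ ⊤ := fun h => h1 (top_le_iff.mp (h ▸ hmin i1 (Finset.mem_univ i1)))
  refine ⟨i0, h0, fun i hi => lt_of_le_of_ne (hmin i (Finset.mem_univ i)) fun he => ?_⟩
  obtain ⟨m0, hm0⟩ := hform i0 h0
  obtain ⟨m, hm⟩ := hform i (he ▸ h0)
  rw [hm0, hm] at he
  have hee : (r : ℤ) * m0 + n * i0.val = (r : ℤ) * m + n * i.val := by exact_mod_cast he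
  have hval : (i0.val : ℤ) = (i.val : ℤ) :=
    key_inj r hr n hcop _ _ m0 m (by positivity) (by exact_mod_cast i0.isLt)
      (by positivity) (by exact_mod_cast i.isLt) hee
  exact hi (Fin.ext (by exact_mod_cast hval)).symm

/-- over `K = k((t))`, with `L/K` unramified cyclic of degree `r`
generated by `Φ` (`v` the integer-valued extension of the `t`-adic valuation,
preserved by `Φ`) and `x ∈ K^×` with `gcd(v(x), r) = 1`, the ring
`D_{L,x} = L[T;Φ]/(T^r − x)` has no nonzero zero divisors. -/
theorem stmt_9 (L : Type*) [Field L] (r : ℕ) (hr : 0 < r)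
    (Φ : L ≃+* L) (hΦr : (⇑Φ)^[r] = id)
    (v : L → WithTop ℤ)
    (hv0 : ∀ a : L, v a = ⊤ ↔ a = 0)
    (hvmul : ∀ a b : L, v (a * b) = v a + v b)
    (hvadd : ∀ a b : L, min (v a) (v b) ≤ v (a + b))
    (hΦv : ∀ a : L, v (Φ a) = v a)
    (x : L) (hxfix : Φ x = x) (n : ℤ) (hvx : v x = (n : WithTop ℤ))
    (hcop : Int.gcd n (r : ℤ) = 1)
    (f g : Fin r → L) (hf : f ≠ 0) (hg : g ≠ 0) :
    oreMul r ⇑Φ x f g ≠ 0 := by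
  classical
  intro hzero
  -- basic valuation facts
  have hv1 : v 1 = 0 := by
    have h := hvmul 1 1
    rw [one_mul] at h
    rcases eq_or_ne (v 1) ⊤ with h1 | h1
    · exact absurd ((hv0 1).mp h1) one_ne_zero
    · obtain ⟨m, hm⟩ := WithTop.ne_top_iff_exists.mp h1
      rw [← hm, ← WithTop.coe_add] at h
      have hm0 : m = m + m := by exact_mod_cast h
      have : m = 0 := by omega
      rw [← hm, this]; rfl
  have hvm1 : v (-1 : L) = 0 := by
    have h := hvmul (-1 : L) (-1)
    rw [neg_mul_neg, one_mul, hv1] at h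
    rcases eq_or_ne (v (-1 : L)) ⊤ with h1 | h1
    · rw [h1] at h; simp at h
    · obtain ⟨m, hm⟩ := WithTop.ne_top_iff_exists.mp h1
      rw [← hm, ← WithTop.coe_add] at h
      have hm0 : (0 : ℤ) = m + m := by exact_mod_cast h
      have : m = 0 := by omega
      rw [← hm, this]; rfl
  have hvneg : ∀ a : L, v (-a) = v a := fun a => by
    rw [← neg_one_mul, hvmul, hvm1, zero_add]
  have hΦit : ∀ (i : ℕ) (a : L), v ((⇑Φ)^[i] a) = v a := by
    intro i
    induction i with
    | zero => intro a; rfl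
    | succ k ih => intro a; rw [Function.iterate_succ_apply, ih (Φ a), hΦv]
  obtain ⟨i1, hfi1⟩ := Function.ne_iff.mp hf
  obtain ⟨j1, hgj1⟩ := Function.ne_iff.mp hg
  rw [Pi.zero_apply] at hfi1 hgj1
  set A : Fin r → WithTop ℤ :=
    fun i => psi r (v (f i)) + ((n * i.val : ℤ) : WithTop ℤ) with hAdef
  set B : Fin r → WithTop ℤ :=
    fun j => psi r (v (g j)) + ((n * j.val : ℤ) : WithTop ℤ) with hBdef
  have hAfin : ∀ i : Fin r, f i ≠ 0 →
      ∀ m : ℤ, v (f i) = (m : WithTop ℤ) →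
      A i = (((r : ℤ) * m + n * i.val : ℤ) : WithTop ℤ) := by
    intro i h m hm
    simp only [hAdef]
    rw [hm, psi_coe, ← WithTop.coe_add]
  have hBfin : ∀ j : Fin r, g j ≠ 0 →
      ∀ m : ℤ, v (g j) = (m : WithTop ℤ) →
      B j = (((r : ℤ) * m + n * j.val : ℤ) : WithTop ℤ) := by
    intro j h m hm
    simp only [hBdef]
    rw [hm, psi_coe, ← WithTop.coe_add]
  have hvexist : ∀ a : L, a ≠ 0 → ∃ m : ℤ, v a = (m : WithTop ℤ) := by
    intro a ha
    obtain ⟨m, hm⟩ := WithTop.ne_top_iff_exists.mp (fun h' => ha ((hv0 a).mp h'))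
    exact ⟨m, hm.symm⟩
  have hAtop : ∀ i : Fin r, f i = 0 → A i = ⊤ := by
    intro i h
    simp only [hAdef]
    rw [(hv0 _).mpr h, psi_top, top_add]
  have hBtop : ∀ j : Fin r, g j = 0 → B j = ⊤ := by
    intro j h
    simp only [hBdef]
    rw [(hv0 _).mpr h, psi_top, top_add]
  have hAform : ∀ i : Fin r, A i ≠ ⊤ →
      ∃ m : ℤ, A i = (((r : ℤ) * m + n * i.val : ℤ) : WithTop ℤ) := by
    intro i hi
    have hfi : f i ≠ 0 := fun h => hi (hAtop i h)
    obtain ⟨m, hm⟩ := hvexist _ hfi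
    exact ⟨m, hAfin i hfi m hm⟩
  have hBform : ∀ j : Fin r, B j ≠ ⊤ →
      ∃ m : ℤ, B j = (((r : ℤ) * m + n * j.val : ℤ) : WithTop ℤ) := by
    intro j hj
    have hgj : g j ≠ 0 := fun h => hj (hBtop j h)
    obtain ⟨m, hm⟩ := hvexist _ hgj
    exact ⟨m, hBfin j hgj m hm⟩
  have hAi1 : A i1 ≠ ⊤ := by
    obtain ⟨m, hm⟩ := hvexist _ hfi1
    rw [hAfin i1 hfi1 m hm]
    exact WithTop.coe_ne_top
  have hBj1 : B j1 ≠ ⊤ := by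
    obtain ⟨m, hm⟩ := hvexist _ hgj1
    rw [hBfin j1 hgj1 m hm]
    exact WithTop.coe_ne_top
  obtain ⟨i0, hi0top, hi0min⟩ := exists_strict_min r hr n hcop A hAform i1 hAi1
  obtain ⟨j0, hj0top, hj0min⟩ := exists_strict_min r hr n hcop B hBform j1 hBj1
  have hfi0 : f i0 ≠ 0 := fun h => hi0top (hAtop i0 h)
  have hgj0 : g j0 ≠ 0 := fun h => hj0top (hBtop j0 h)
  obtain ⟨α, hα⟩ := hvexist _ hfi0
  obtain ⟨β, hβ⟩ := hvexist _ hgj0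
  have hAi0 := hAfin i0 hfi0 α hα
  have hBj0 := hBfin j0 hgj0 β hβ
  -- the target coefficient
  have hn0lt : (i0.val + j0.val) % r < r := Nat.mod_lt _ hr
  set n0 : Fin r := ⟨(i0.val + j0.val) % r, hn0lt⟩ with hn0def
  have hsum := congrFun hzero n0
  rw [Pi.zero_apply] at hsum
  simp only [oreMul] at hsum
  set F : Fin r × Fin r → L := fun p =>
    if (p.1.val + p.2.val) % r = n0.val then
      (if p.1.val + p.2.val < r then f p.1 * (⇑Φ)^[p.1.val] (g p.2)
       else x * (f p.1 * (⇑Φ)^[p.1.val] (g p.2)))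
    else 0 with hFdef
  have hsum' : ∑ p : Fin r × Fin r, F p = 0 := by
    rw [hFdef, Fintype.sum_prod_type]
    exact hsum
  -- value of a term
  have hterm : ∀ p : Fin r × Fin r, (p.1.val + p.2.val) % r = n0.val →
      ∀ mf mg : ℤ, v (f p.1) = (mf : WithTop ℤ) → v (g p.2) = (mg : WithTop ℤ) →
      v (F p) = ((if p.1.val + p.2.val < r then mf + mg else n + mf + mg : ℤ) : WithTop ℤ) := by
    intro p hc mf mg hmf hmg
    simp only [hFdef]
    rw [if_pos hc]
    by_cases hlt : p.1.val + p.2.val < r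
    · rw [if_pos hlt, if_pos hlt, hvmul, hΦit, hmf, hmg, ← WithTop.coe_add]
    · rw [if_neg hlt, if_neg hlt, hvmul, hvmul, hΦit, hvx, hmf, hmg,
        ← WithTop.coe_add, ← WithTop.coe_add]
      norm_num [add_assoc]
  -- index congruence facts
  have hmodeq : ∀ i j : Fin r, (i.val + j.val) % r = n0.val →
      (if i.val + j.val < r then (i.val + j.val : ℤ) = (n0.val : ℤ)
       else (i.val + j.val : ℤ) = (n0.val : ℤ) + r) := by
    intro i j hc
    by_cases hlt : i.val + j.val < r
    · rw [if_pos hlt]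
      rw [Nat.mod_eq_of_lt hlt] at hc
      exact_mod_cast hc
    · rw [if_neg hlt]
      have h1 : (i.val + j.val) % r = (i.val + j.val - r) % r :=
        Nat.mod_eq_sub_mod (le_of_not_gt hlt)
      have h2 : (i.val + j.val - r) % r = i.val + j.val - r :=
        Nat.mod_eq_of_lt (by omega)
      have : i.val + j.val = n0.val + r := by omega
      exact_mod_cast this
  set p0 : Fin r × Fin r := (i0, j0) with hp0def
  have hp0cond : (p0.1.val + p0.2.val) % r = n0.val := rfl
  set c0 : ℤ := if i0.val + j0.val < r then α + β else n + α + β with hc0def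
  have hvF0 : v (F p0) = (c0 : WithTop ℤ) := hterm p0 hp0cond α β hα hβ
  -- strict inequality for other terms
  have hmain : ∀ p : Fin r × Fin r, p ≠ p0 → (c0 : WithTop ℤ) < v (F p) := by
    intro p hp
    by_cases hc : (p.1.val + p.2.val) % r = n0.val
    · by_cases hf' : f p.1 = 0
      · have : F p = 0 := by simp [hFdef, hf']
        rw [this, (hv0 0).mpr rfl]
        exact WithTop.coe_lt_top c0
      · by_cases hg' : g p.2 = 0
        · have : F p = 0 := by simp [hFdef, hg']
          rw [this, (hv0 0).mpr rfl]
          exact WithTop.coe_lt_top c0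
        · obtain ⟨mf, hmf⟩ := hvexist _ hf'
          obtain ⟨mg, hmg⟩ := hvexist _ hg'
          rw [hterm p hc mf mg hmf hmg, WithTop.coe_lt_coe]
          -- integer inequality
          have hAle : (r : ℤ) * α + n * i0.val ≤ (r : ℤ) * mf + n * p.1.val := by
            have h1 : A i0 ≤ A p.1 := by
              rcases eq_or_ne p.1 i0 with he | he
              · rw [he]
              · exact le_of_lt (hi0min p.1 he)
            rw [hAi0, hAfin p.1 hf' mf hmf] at h1
            exact_mod_cast h1
          have hBle : (r : ℤ) * β + n * j0.val ≤ (r : ℤ) * mg + n * p.2.val := by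
            have h1 : B j0 ≤ B p.2 := by
              rcases eq_or_ne p.2 j0 with he | he
              · rw [he]
              · exact le_of_lt (hj0min p.2 he)
            rw [hBj0, hBfin p.2 hg' mg hmg] at h1
            exact_mod_cast h1
          have hstrict : (r : ℤ) * α + n * i0.val + ((r : ℤ) * β + n * j0.val)
              < (r : ℤ) * mf + n * p.1.val + ((r : ℤ) * mg + n * p.2.val) := by
            rcases (Prod.ext_iff.not.mp hp |> not_and_or.mp) with he | he
            · have h1 : A i0 < A p.1 := hi0min p.1 he
              rw [hAi0, hAfin p.1 hf' mf hmf] at h1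
              have h1' : (r : ℤ) * α + n * i0.val < (r : ℤ) * mf + n * p.1.val := by
                exact_mod_cast h1
              linarith
            · have h1 : B j0 < B p.2 := hj0min p.2 he
              rw [hBj0, hBfin p.2 hg' mg hmg] at h1
              have h1' : (r : ℤ) * β + n * j0.val < (r : ℤ) * mg + n * p.2.val := by
                exact_mod_cast h1
              linarith
          have hm0 := hmodeq i0 j0 hp0cond
          have hmp := hmodeq p.1 p.2 hc
          have hr0 : (0 : ℤ) < (r : ℤ) := by exact_mod_cast hr
          -- relate r * c0 and r * c to the A+B sums
          have hrc0 : (r : ℤ) * c0 + n * n0.val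
              = (r : ℤ) * α + n * i0.val + ((r : ℤ) * β + n * j0.val) := by
            rw [hc0def]
            by_cases h : i0.val + j0.val < r
            · rw [if_pos h]
              rw [if_pos h] at hm0
              push_cast at hm0 ⊢
              linear_combination (-n) * hm0
            · rw [if_neg h]
              rw [if_neg h] at hm0
              push_cast at hm0 ⊢
              linear_combination (-n) * hm0
          have hrc : (r : ℤ) * (if p.1.val + p.2.val < r then mf + mg else n + mf + mg) + n * n0.val
              = (r : ℤ) * mf + n * p.1.val + ((r : ℤ) * mg + n * p.2.val) := by
            by_cases h : p.1.val + p.2.val < r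
            · rw [if_pos h]
              rw [if_pos h] at hmp
              push_cast at hmp ⊢
              linear_combination (-n) * hmp
            · rw [if_neg h]
              rw [if_neg h] at hmp
              push_cast at hmp ⊢
              linear_combination (-n) * hmp
          have hmul : (r : ℤ) * c0
              < (r : ℤ) * (if p.1.val + p.2.val < r then mf + mg else n + mf + mg) := by
            linarith
          exact lt_of_mul_lt_mul_left hmul (le_of_lt hr0)
    · have : F p = 0 := by simp [hFdef, hc]
      rw [this, (hv0 0).mpr rfl]
      exact WithTop.coe_lt_top c0
  exact sum_ne_zero_of_strict_min v hv0 hvadd hvneg Finset.univ F p0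
    (Finset.mem_univ p0) c0 hvF0 (fun p _ hp => hmain p hp) hsum'
end

section
/- Let K = k((t)), L/K a cyclic Galois extension of degree r (via the product setup L = L₀^m with L₀/K cyclic of degree d, r = md), x ∈ K^×, and for f = Σᵢ aᵢTⁱ ∈ D_{L,x} set w_{j,x}(f) = min_i (v_{j,t}(aᵢ) + i·v_t(x)/r), where v_{j,t} is the valuation on the j-th factor. Then v_t(Nrd(f)) ≥ d · Σ_{j=1}^m w_{j,x}(f). -/
/-!
`Nrd(f) = det M_f` is a signed sum over permutations `σ` of `∏_w M_{σ w, w}`, so its valuation is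
at least that of one such product. The entry `M_{u,w}` is a `Φ`-twist of `a_{u-w}`, shifted in
the `L₀^m`-coordinates by `w` and multiplied by `x` when the index `u - w` wraps around modulo `r`;
the weight `i · v(x) / r` on `aᵢ` absorbs exactly this factor, up to terms depending only on `u`
and on `w`, which cancel in the product because `σ` is a bijection. Finally, as `w` runs over
`0, …, r - 1`, the coordinate `j₀ - w` meets each of the `m` factors exactly `d` times.
-/

/-- The twisted cyclic shift `Φ(a₁,…,a_m) = (Φ₀(a_m), a₁, …, a_{m-1})` on `L = L₀^m`. -/
noncomputable def cycShift {L₀ : Type*} (m : ℕ) [NeZero m] (Φ₀ : L₀ → L₀)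
    (a : Fin m → L₀) : Fin m → L₀ :=
  fun i => if i = 0 then Φ₀ (a (i - 1)) else a (i - 1)

open Finset Fin.NatCast

namespace AddValuation

variable {R Γ : Type*} [CommRing R] [LinearOrderedAddCommMonoidWithTop Γ] (V : AddValuation R Γ)

theorem map_prod {ι : Type*} (s : Finset ι) (f : ι → R) :
    V (∏ i ∈ s, f i) = ∑ i ∈ s, V (f i) := by
  classical
  induction s using Finset.induction_on with
  | empty => simp
  | insert i s hi ih => rw [prod_insert hi, sum_insert hi, V.map_mul, ih]

theorem map_intUnits_smul (ε : ℤˣ) (a : R) : V (ε • a) = V a := by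
  rcases Int.units_eq_one_or ε with rfl | rfl <;> simp [Units.smul_def, V.map_neg]

theorem exists_perm_map_prod_le_map_det {n : Type*} [Fintype n] [DecidableEq n]
    (M : Matrix n n R) : ∃ σ : Equiv.Perm n, V (∏ i, M (σ i) i) ≤ V M.det := by
  obtain ⟨σ, -, hσ⟩ := exists_min_image univ (fun σ : Equiv.Perm n => V (∏ i, M (σ i) i))
    univ_nonempty
  refine ⟨σ, ?_⟩
  rw [Matrix.det_apply]
  exact V.map_le_sum fun τ _ => (hσ τ (mem_univ τ)).trans_eq (V.map_intUnits_smul _ _).symm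

end AddValuation

theorem sum_fin_mul_comp_natCast {β : Type*} [AddCommMonoid β] (m d : ℕ) [NeZero m]
    (g : Fin m → β) : ∑ i : Fin (m * d), g (i.val : Fin m) = d • ∑ j : Fin m, g j := by
  let e : Fin d × Fin m ≃ Fin (m * d) := finProdFinEquiv.trans (finCongr (Nat.mul_comm d m))
  have he : ∀ p : Fin d × Fin m, ((e p).val : Fin m) = p.2 := fun p => by
    change ((p.2.val + m * p.1.val : ℕ) : Fin m) = p.2
    simp [Fin.cast_val_eq_self]
  rw [← e.sum_comp, Fintype.sum_prod_type]
  simp [he]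

theorem apply_iterate_cycShift_apply {L₀ α : Type*} {m : ℕ} [NeZero m] {Φ₀ : L₀ → L₀}
    {v : L₀ → α} (hΦ₀ : ∀ a, v (Φ₀ a) = v a) (c : ℕ) (b : Fin m → L₀) (j : Fin m) :
    v ((cycShift m Φ₀)^[c] b j) = v (b (j - c)) := by
  induction c generalizing j with
  | zero => simp
  | succ c ih =>
    have hstep : v (cycShift m Φ₀ ((cycShift m Φ₀)^[c] b) j)
        = v ((cycShift m Φ₀)^[c] b (j - 1)) := by
      unfold cycShift
      split_ifs <;> simp [hΦ₀]
    rw [Function.iterate_succ_apply', hstep, ih, sub_sub, Nat.cast_succ, add_comm]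

section oreMatrix

variable {L : Type*} [CommRing L] {r : ℕ} (Φ : L → L) (x : L) (a : Fin r → L)

theorem oreMatrix_apply_of_le {u w : Fin r} (h : w ≤ u) :
    oreMatrix r Φ x a u w = Φ^[w] (a (u - w)) := by
  simp only [oreMatrix, Matrix.of_apply, dif_pos (Fin.le_def.mp h)]
  congr
  exact (Fin.sub_val_of_le h).symm

theorem oreMatrix_apply_of_lt {u w : Fin r} (h : u < w) :
    oreMatrix r Φ x a u w = x * Φ^[w] (a (u - w)) := by
  simp only [oreMatrix, Matrix.of_apply, dif_neg (not_le.mpr (Fin.lt_def.mp h))]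
  have := Fin.lt_def.mp h
  congr
  rw [Nat.mod_eq_of_lt (by omega)]
  omega

end oreMatrix

section NrdBound

variable {L₀ : Type*} [CommRing L₀] {m : ℕ} [NeZero m] {r : ℕ} {Φ₀ : L₀ → L₀}
  {V : AddValuation L₀ (WithTop ℤ)} {x : L₀} {n : ℤ} (a : Fin r → Fin m → L₀)

/-- Above the diagonal the index `u - w` wraps around to `r + u - w` and a factor `x` appears;
the weight `i · v(x)` on `aᵢ` makes both cases give this identity. -/
theorem nsmul_valuation_oreMatrix_add (hΦ₀ : ∀ b, V (Φ₀ b) = V b) (hx : V x = n)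
    (u w : Fin r) (j : Fin m) :
    r • V (oreMatrix r (cycShift m Φ₀) (fun _ => x) a u w j) + ((u * n : ℤ) : WithTop ℤ)
      = r • V (a (u - w) (j - (w : ℕ))) + ((((u - w : Fin r) : ℕ) * n : ℤ) : WithTop ℤ)
        + ((w * n : ℤ) : WithTop ℤ) := by
  rcases le_or_gt w u with h | h
  · rw [oreMatrix_apply_of_le _ _ _ h, apply_iterate_cycShift_apply hΦ₀, add_assoc,
      ← WithTop.coe_add, Fin.sub_val_of_le h]
    congr 1
    rw [WithTop.coe_eq_coe]
    push_cast [Fin.le_def.mp h]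
    ring
  · rw [oreMatrix_apply_of_lt _ _ _ h, Pi.mul_apply, V.map_mul, apply_iterate_cycShift_apply hΦ₀,
      hx, smul_add, ← WithTop.coe_nsmul, add_comm ((r • n : ℤ) : WithTop ℤ), add_assoc,
      add_assoc, ← WithTop.coe_add, ← WithTop.coe_add, Fin.coe_sub_iff_lt.mpr h]
    have : (w : ℕ) ≤ r + u := by omega
    congr 1
    rw [WithTop.coe_eq_coe]
    push_cast [this, nsmul_eq_mul]
    ring

theorem sum_inf_le_nsmul_valuation_prod (hΦ₀ : ∀ b, V (Φ₀ b) = V b) (hx : V x = n)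
    (j : Fin m) (σ : Equiv.Perm (Fin r)) :
    ∑ w : Fin r, (univ.inf fun i : Fin r =>
        r • V (a i (j - (w : ℕ))) + ((i * n : ℤ) : WithTop ℤ))
      ≤ r • V (∏ w, ((oreMatrix r (cycShift m Φ₀) (fun _ => x) a).map (· j)) (σ w) w) := by
  rw [V.map_prod, smul_sum, ← WithTop.add_le_add_iff_right
    (WithTop.coe_ne_top : ((∑ w : Fin r, (w * n : ℤ) : ℤ) : WithTop ℤ) ≠ ⊤)]
  calc _ = ∑ w : Fin r, ((univ.inf fun i : Fin r =>
          r • V (a i (j - (w : ℕ))) + ((i * n : ℤ) : WithTop ℤ)) + ((w * n : ℤ) : WithTop ℤ)) := by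
        rw [WithTop.coe_sum, sum_add_distrib]
    _ ≤ ∑ w : Fin r, (r • V (oreMatrix r (cycShift m Φ₀) (fun _ => x) a (σ w) w j)
          + (((σ w : ℕ) * n : ℤ) : WithTop ℤ)) := by
        refine sum_le_sum fun w _ => ?_
        rw [nsmul_valuation_oreMatrix_add a hΦ₀ hx]
        gcongr
        exact Finset.inf_le (mem_univ (σ w - w))
    _ = _ := by
        rw [sum_add_distrib, ← WithTop.coe_sum,
          Equiv.sum_comp σ (fun w : Fin r => ((w : ℕ) * n : ℤ))]
        rfl

theorem nsmul_sum_inf_le_nsmul_valuation_det_oreMatrix (d : ℕ) (hr : r = m * d)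
    (hΦ₀ : ∀ b, V (Φ₀ b) = V b) (hx : V x = n) (j₀ : Fin m) :
    d • ∑ j : Fin m, (univ.inf fun i : Fin r => r • V (a i j) + ((i * n : ℤ) : WithTop ℤ))
      ≤ r • V ((oreMatrix r (cycShift m Φ₀) (fun _ => x) a).map (· j₀)).det := by
  obtain ⟨σ, hσ⟩ := V.exists_perm_map_prod_le_map_det
    ((oreMatrix r (cycShift m Φ₀) (fun _ => x) a).map (· j₀))
  subst hr
  rw [← (Equiv.subLeft j₀).sum_comp, ← sum_fin_mul_comp_natCast]
  exact (sum_inf_le_nsmul_valuation_prod a hΦ₀ hx j₀ σ).trans (nsmul_le_nsmul_right hσ _)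

end NrdBound

/-- Both sides are stated multiplied by `r` (so `w_{j,x}` appears as
`min_i (r·v_j(aᵢ) + i·v(x))`), and `Nrd(f)`, which lies in `K`, is read on any
coordinate `j₀` of `det M_f ∈ L = L₀^m`. -/
theorem stmt_10_general (L₀ : Type*) [Field L₀] (d m r : ℕ)
    [NeZero m] (hr : r = m * d)
    (Φ₀ : L₀ ≃+* L₀)
    (v : L₀ → WithTop ℤ)
    (hv0 : ∀ a : L₀, v a = ⊤ ↔ a = 0)
    (hvmul : ∀ a b : L₀, v (a * b) = v a + v b)
    (hvadd : ∀ a b : L₀, min (v a) (v b) ≤ v (a + b))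
    (hΦ₀v : ∀ a : L₀, v (Φ₀ a) = v a)
    (x : L₀) (n : ℤ) (hvx : v x = (n : WithTop ℤ))
    (a : Fin r → (Fin m → L₀)) :
    ∀ j₀ : Fin m,
      d • ∑ j : Fin m,
          (Finset.univ.inf fun i : Fin r =>
            r • v (a i j) + (((i.val : ℤ) * n : ℤ) : WithTop ℤ))
        ≤ r • v (((oreMatrix r (cycShift m ⇑Φ₀) (fun _ => x) a).map
            (fun g => g j₀)).det) := by
  have hv1 : v 1 = 0 := by
    have h : v 1 + v 1 = 0 + v 1 := by rw [← hvmul, mul_one, zero_add]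
    exact WithTop.add_right_cancel (mt (hv0 1).mp one_ne_zero) h
  exact nsmul_sum_inf_le_nsmul_valuation_det_oreMatrix
    (V := AddValuation.of v ((hv0 0).mpr rfl) hv1 hvadd hvmul) a d hr hΦ₀v hvx

/-- `v_t(Nrd(f)) ≥ d · Σ_{j=1}^m w_{j,x}(f)`, where
`w_{j,x}(f) = min_i (v_j(aᵢ) + i·v(x)/r)`.  Both sides are stated multiplied
by `r` (so `w_{j,x}` appears as `min_i (r·v_j(aᵢ) + i·v(x))`), and `Nrd(f)`,
which lies in `K`, is read on any coordinate `j₀` of `det M_f ∈ L = L₀^m`. -/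
theorem stmt_10 (L₀ : Type*) [Field L₀] (d m r : ℕ) (hd : 0 < d) (hm : 0 < m)
    [NeZero m] (hr : r = m * d) (hrpos : 0 < r)
    (Φ₀ : L₀ ≃+* L₀) (hΦ₀d : (⇑Φ₀)^[d] = id)
    (v : L₀ → WithTop ℤ)
    (hv0 : ∀ a : L₀, v a = ⊤ ↔ a = 0)
    (hvmul : ∀ a b : L₀, v (a * b) = v a + v b)
    (hvadd : ∀ a b : L₀, min (v a) (v b) ≤ v (a + b))
    (hΦ₀v : ∀ a : L₀, v (Φ₀ a) = v a)
    (x : L₀) (hxfix : Φ₀ x = x) (hx : x ≠ 0) (n : ℤ) (hvx : v x = (n : WithTop ℤ))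
    (a : Fin r → (Fin m → L₀)) :
    ∀ j₀ : Fin m,
      d • ∑ j : Fin m,
          (Finset.univ.inf fun i : Fin r =>
            r • v (a i j) + (((i.val : ℤ) * n : ℤ) : WithTop ℤ))
        ≤ r • v (((oreMatrix r (cycShift m ⇑Φ₀) (fun _ => x) a).map
            (fun g => g j₀)).det) :=
  stmt_10_general L₀ d m r hr Φ₀ v hv0 hvmul hvadd hΦ₀v x n hvx a
end

section
/- Let k be a finite field with q elements and ℓ/k an extension of degree r ≥ 1. Let C ⊆ End_k(ℓ)^s be an ℓ-linear sum-rank metric code of ℓ-dimension 2 whose minimum sum-rank weight is rs − 1. Then s ≤ q + 1 if r = 1, and s ≤ q − 1 if r > 1. -/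
/-!
Sum-rank weight `rs - 1` means that a nonzero codeword has kernels of total dimension at most
one, so it cannot vanish at two points `(i, x)`, `(j, y)` unless `i = j` and `x, y` span the same
`k`-line. Since `C` has `ℓ`-dimension `2`, every `(i, [x]) ∈ Fin s × ℙ_k(ℓ)` is killed by an
`ℓ`-line of codewords, and distinct points get distinct lines. Hence
`s · #ℙ_k(ℓ) ≤ #ℙ_ℓ(C)`, i.e. `s (q^r - 1)/(q - 1) ≤ q^r + 1`.
-/

open Module LinearMap Projectivization Finset
open scoped LinearAlgebra.Projectivization

section

variable {k V W ι : Type*} [Field k] [AddCommGroup V] [Module k V] [AddCommGroup W] [Module k W]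
  [FiniteDimensional k V] [Fintype ι]

theorem sum_finrank_range_add_sum_finrank_ker (h : ι → V →ₗ[k] W) :
    ∑ i, finrank k (range (h i)) + ∑ i, finrank k (ker (h i)) =
      Fintype.card ι * finrank k V := by
  simp [← sum_add_distrib, finrank_range_add_finrank_ker]

theorem eq_and_exists_smul_eq_of_sum_finrank_ker_le_one {h : ι → V →ₗ[k] W}
    (hker : ∑ i, finrank k (ker (h i)) ≤ 1) {i j : ι} {x y : V} (hx : x ≠ 0) (hy : y ≠ 0)
    (hix : h i x = 0) (hjy : h j y = 0) : i = j ∧ ∃ c : k, c • x = y := by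
  classical
  have one_le_finrank_ker {i : ι} {x : V} (hx : x ≠ 0) (hix : h i x = 0) :
      1 ≤ finrank k (ker (h i)) :=
    Submodule.one_le_finrank_iff.mpr ((Submodule.ne_bot_iff _).mpr ⟨x, hix, hx⟩)
  obtain rfl : i = j := by
    by_contra hij
    have hpair := sum_le_sum_of_subset (f := fun i ↦ finrank k (ker (h i))) (subset_univ {i, j})
    rw [sum_pair hij] at hpair
    have := one_le_finrank_ker hx hix
    have := one_le_finrank_ker hy hjy
    omega
  have hrank : finrank k (ker (h i)) = 1 :=
    le_antisymm ((single_le_sum (fun _ _ ↦ Nat.zero_le _) (mem_univ i)).trans hker)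
      (one_le_finrank_ker hx hix)
  obtain ⟨c, hc⟩ := (finrank_eq_one_iff_of_nonzero' (⟨x, hix⟩ : ker (h i))
    fun h0 ↦ hx (congrArg Subtype.val h0)).mp hrank ⟨y, hjy⟩
  exact ⟨rfl, c, congrArg Subtype.val hc⟩

end

section

variable {k ℓ V ι : Type*} [Field k] [Field ℓ] [Algebra k ℓ] [AddCommGroup V] [Module k V]

theorem Submodule.exists_mem_ne_zero_apply_eq_zero (C : Submodule ℓ (ι → V →ₗ[k] ℓ))
    (hC : 1 < finrank ℓ C) (i : ι) (x : V) : ∃ h ∈ C, h ≠ 0 ∧ h i x = 0 := by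
  have : FiniteDimensional ℓ C := FiniteDimensional.of_finrank_pos (by omega)
  let ev : C →ₗ[ℓ] ℓ := applyₗ' ℓ x ∘ₗ proj i ∘ₗ C.subtype
  obtain ⟨⟨h, hC⟩, hev, hne⟩ :=
    Submodule.exists_mem_ne_zero_of_ne_bot <|
      ker_ne_bot_of_finrank_lt (K := ℓ) (V := C) (V₂ := ℓ) (f := ev) (by rwa [finrank_self])
  exact ⟨h, hC, by simpa using hne, hev⟩

theorem Submodule.card_mul_card_projectivization_le [Fintype ι] [FiniteDimensional k V]
    [Finite ℓ] (C : Submodule ℓ (ι → V →ₗ[k] ℓ)) (hC : 1 < finrank ℓ C)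
    (hker : ∀ h ∈ C, h ≠ 0 → ∑ i, finrank k (ker (h i)) ≤ 1) :
    Fintype.card ι * Nat.card (ℙ k V) ≤ Nat.card (ℙ ℓ C) := by
  have : FiniteDimensional ℓ C := FiniteDimensional.of_finrank_pos (by omega)
  have : Finite C := Module.finite_of_finite ℓ
  choose g hgC hgne hg using C.exists_mem_ne_zero_apply_eq_zero hC
  let P (p : ι × ℙ k V) : ℙ ℓ C :=
    Projectivization.mk ℓ (⟨g p.1 p.2.rep, hgC _ _⟩ : C) (by simpa using hgne p.1 p.2.rep)
  have hP : Function.Injective P := by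
    rintro ⟨i, p⟩ ⟨j, p'⟩ hPeq
    obtain ⟨a, ha⟩ := (mk_eq_mk_iff' ..).mp hPeq
    have hj : g i p.rep j p'.rep = 0 := by
      simpa [hg] using congrArg (fun f : C ↦ (f : ι → V →ₗ[k] ℓ) j p'.rep) ha.symm
    obtain ⟨rfl, c, hc⟩ := eq_and_exists_smul_eq_of_sum_finrank_ker_le_one
      (hker _ (hgC i p.rep) (hgne i p.rep)) (rep_nonzero p) (rep_nonzero p') (hg i p.rep) hj
    refine congrArg (i, ·) ?_
    rw [← mk_rep p, ← mk_rep p', eq_comm, mk_eq_mk_iff']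
    exact ⟨c, hc⟩
  simpa [Nat.card_prod] using Nat.card_le_card_of_injective P hP

end

theorem Nat.lt_of_mul_sum_range_pow_le {q r s : ℕ} (hq : 2 ≤ q) (hr : 2 ≤ r)
    (h : s * ∑ i ∈ range r, q ^ i ≤ q ^ r + 1) : s < q := by
  obtain ⟨t, rfl⟩ : ∃ t, r = t + 2 := ⟨r - 2, by omega⟩
  have hone : 1 ≤ ∑ i ∈ range (t + 1), q ^ i :=
    single_le_sum (f := (q ^ ·)) (fun _ _ ↦ Nat.zero_le _) (mem_range.mpr t.succ_pos)
  rw [sum_range_succ, pow_succ q (t + 1)] at h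
  by_contra! hs
  nlinarith [Nat.mul_le_mul hs (Nat.add_le_add_right hone (q ^ (t + 1)))]

theorem stmt_13_general (k ℓ : Type*) [Field k] [Field ℓ] [Algebra k ℓ] [Fintype k]
    (q r s : ℕ) (hq : Fintype.card k = q)
    (hr : Module.finrank k ℓ = r) (hr1 : 1 ≤ r)
    (C : Submodule ℓ (Fin s → (ℓ →ₗ[k] ℓ)))
    (hdim : Module.finrank ℓ C = 2)
    (hmin : ∀ f ∈ C, f ≠ 0 →
      r * s - 1 ≤ ∑ i, Module.finrank k (LinearMap.range (f i))) :
    (r = 1 → s ≤ q + 1) ∧ (1 < r → s ≤ q - 1) := by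
  have : FiniteDimensional k ℓ := FiniteDimensional.of_finrank_pos (by omega)
  have : Finite ℓ := Module.finite_of_finite k
  have : Fintype ℓ := Fintype.ofFinite ℓ
  have hker (f : Fin s → ℓ →ₗ[k] ℓ) (hf : f ∈ C) (hne : f ≠ 0) :
      ∑ i, finrank k (ker (f i)) ≤ 1 := by
    have hsum := sum_finrank_range_add_sum_finrank_ker f
    rw [Fintype.card_fin, hr, mul_comm] at hsum
    have := hmin f hf hne
    omega
  have hcount := Submodule.card_mul_card_projectivization_le C (by omega) hker
  rw [Fintype.card_fin, card_of_finrank k ℓ hr, card_of_finrank_two ℓ C hdim,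
    Nat.card_eq_fintype_card (α := k), Nat.card_eq_fintype_card (α := ℓ),
    Module.card_eq_pow_finrank (K := k) (V := ℓ), hq, hr] at hcount
  have hq2 : 2 ≤ q := hq ▸ Fintype.one_lt_card
  refine ⟨?_, fun hr2 ↦ ?_⟩
  · rintro rfl
    simpa using hcount
  · have := Nat.lt_of_mul_sum_range_pow_le hq2 hr2 hcount
    omega

/-- let `k` be a finite field with `q` elements, `ℓ/k` of degree
`r ≥ 1`, and `C ⊆ End_k(ℓ)^s` an `ℓ`-linear sum-rank metric code of
`ℓ`-dimension `2` and minimum sum-rank weight `rs − 1`.  Then `s ≤ q + 1` if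
`r = 1`, and `s ≤ q − 1` if `r > 1`. -/
theorem stmt_13 (k ℓ : Type*) [Field k] [Field ℓ] [Algebra k ℓ] [Fintype k]
    (q r s : ℕ) (hq : Fintype.card k = q)
    (hr : Module.finrank k ℓ = r) (hr1 : 1 ≤ r) (hs : 1 ≤ s)
    (C : Submodule ℓ (Fin s → (ℓ →ₗ[k] ℓ)))
    (hdim : Module.finrank ℓ C = 2)
    (hmin : ∀ f ∈ C, f ≠ 0 →
      r * s - 1 ≤ ∑ i, Module.finrank k (LinearMap.range (f i)))
    (hex : ∃ f ∈ C, f ≠ 0 ∧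
      ∑ i, Module.finrank k (LinearMap.range (f i)) = r * s - 1) :
    (r = 1 → s ≤ q + 1) ∧ (1 < r → s ≤ q - 1) :=
  stmt_13_general k ℓ q r s hq hr hr1 C hdim hmin
end

section
/- For δ > 0 and r ≥ 1, the limit as s → ∞ of (1/s)·Σ_{i=1}^{⌈δsr⌉−1} log_q(1 + (s−1)/i) equals δr·log_q(1 + 1/(δr)) + log_q(1 + δr). -/
/-!
With `m = s - 1` and `N = ⌈δ s r⌉₊ - 1`, the product `∏_{i ≤ N} (1 + m / i)` telescopes to the
binomial coefficient `C(m + N, N)`. Stirling's formula in the crude form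
`log n! = n log n - n + o(n)` then gives the entropy asymptotics
`(1/s) log C(m + N, N) → (1 + a) log (1 + a) - a log a` for `a = δ r`, which is the stated limit
since `a log (1 + 1/a) = a log (1 + a) - a log a`.
-/

open Filter Real Topology
open scoped Nat

theorem tendsto_log_factorial_sub_div_self :
    Tendsto (fun n : ℕ => (log n ! - (n * log n - n)) / n) atTop (𝓝 0) := by
  have h_seq : Tendsto (fun n : ℕ => log (Stirling.stirlingSeq n) / n) atTop (𝓝 0) :=
    (((continuousAt_log (by positivity)).tendsto.comp
      Stirling.tendsto_stirlingSeq_sqrt_pi).div_atTop tendsto_natCast_atTop_atTop)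
  have h_sqrt : Tendsto (fun n : ℕ => log (2 * n) / (2 * n)) atTop (𝓝 0) :=
    isLittleO_log_id_atTop.tendsto_div_nhds_zero.comp
      (tendsto_natCast_atTop_atTop.const_mul_atTop two_pos)
  have h_sum := h_seq.add h_sqrt
  rw [add_zero] at h_sum
  refine h_sum.congr' ?_
  filter_upwards [eventually_ne_atTop 0] with n hn
  have hn : (n : ℝ) ≠ 0 := Nat.cast_ne_zero.mpr hn
  have h_formula := Stirling.log_stirlingSeq_formula n
  rw [log_div (by positivity) (by positivity), log_exp] at h_formula
  rw [h_formula]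
  field_simp
  ring

theorem tendsto_log_factorial_sub_mul_log_div {α : Type*} {l : Filter α} {n : α → ℕ}
    {x : α → ℝ} {c : ℝ} (hc : 0 < c) (hx : Tendsto x l atTop)
    (hn : Tendsto (fun t => (n t : ℝ) / x t) l (𝓝 c)) :
    Tendsto (fun t => (log (n t)! - n t * log (x t)) / x t) l (𝓝 (c * log c - c)) := by
  have hn_top : Tendsto n l atTop := by
    refine tendsto_natCast_atTop_iff.mp ((hn.pos_mul_atTop hc hx).congr' ?_)
    filter_upwards [hx.eventually_gt_atTop 0] with t ht
    exact div_mul_cancel₀ _ ht.ne'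
  have h_err := (tendsto_log_factorial_sub_div_self.comp hn_top).mul hn
  have h_main := ((continuous_mul_log.tendsto c).comp hn).sub hn
  have h_sum := h_err.add h_main
  rw [zero_mul, zero_add] at h_sum
  refine h_sum.congr' ?_
  filter_upwards [hx.eventually_gt_atTop 0, hn_top.eventually_ne_atTop 0] with t hxt hnt
  have hnt : (n t : ℝ) ≠ 0 := Nat.cast_ne_zero.mpr hnt
  simp only [Function.comp_apply, log_div hnt hxt.ne']
  field_simp
  ring

theorem tendsto_log_choose_div {α : Type*} {l : Filter α} {m N : α → ℕ} {x : α → ℝ} {b a : ℝ}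
    (hx : Tendsto x l atTop) (hm : Tendsto (fun t => (m t : ℝ) / x t) l (𝓝 b))
    (hN : Tendsto (fun t => (N t : ℝ) / x t) l (𝓝 a)) (hb : 0 < b) (ha : 0 < a) :
    Tendsto (fun t => log ((m t + N t).choose (N t)) / x t) l
      (𝓝 ((b + a) * log (b + a) - b * log b - a * log a)) := by
  have hmN : Tendsto (fun t => ((m t + N t : ℕ) : ℝ) / x t) l (𝓝 (b + a)) :=
    (hm.add hN).congr fun t => by push_cast; ring
  have h := ((tendsto_log_factorial_sub_mul_log_div (add_pos hb ha) hx hmN).sub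
    (tendsto_log_factorial_sub_mul_log_div hb hx hm)).sub
    (tendsto_log_factorial_sub_mul_log_div ha hx hN)
  convert h using 1
  · ext t
    have h_fact := congrArg (fun k : ℕ => log (k : ℝ))
      (Nat.add_choose_mul_factorial_mul_factorial (m t) (N t))
    have h_choose : ((m t + N t).choose (N t) : ℝ) ≠ 0 :=
      Nat.cast_ne_zero.mpr (Nat.choose_pos (by omega)).ne'
    simp only [Nat.cast_mul] at h_fact
    rw [log_mul (by positivity) (by positivity), log_mul h_choose (by positivity)] at h_fact
    rw [← h_fact]
    push_cast
    ring
  · congr 1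
    ring

theorem sum_log_one_add_div_eq_log_choose (m N : ℕ) :
    ∑ i ∈ Finset.Icc 1 N, log (1 + (m : ℝ) / i) = log ((m + N).choose N) := by
  induction N with
  | zero => simp
  | succ N ih =>
    rw [Finset.sum_Icc_succ_top (by omega), ih]
    have h_choose : ((m + (N + 1)).choose (N + 1) : ℝ) =
        (m + N).choose N * ((m + N + 1) / (N + 1)) := by
      have := Nat.add_one_mul_choose_eq (m + N) N
      rw [← add_assoc]
      field_simp
      exact_mod_cast this.symm.trans (mul_comm _ _)
    have h_pos : (0 : ℝ) < (m + N).choose N := by exact_mod_cast Nat.choose_pos (by omega)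
    rw [h_choose, log_mul h_pos.ne' (by positivity)]
    congr 2
    push_cast
    field_simp
    ring

theorem tendsto_natCeil_sub_one_div_atTop :
    Tendsto (fun x : ℝ => ((⌈x⌉₊ - 1 : ℕ) : ℝ) / x) atTop (𝓝 1) := by
  have h := tendsto_nat_ceil_div_atTop.sub (tendsto_inv_atTop_zero (𝕜 := ℝ))
  rw [sub_zero] at h
  refine h.congr' ?_
  filter_upwards [eventually_gt_atTop (0 : ℝ)] with x hx
  rw [Nat.cast_pred (Nat.ceil_pos.mpr hx), sub_div, one_div]

theorem stmt_16_general (q : ℝ) (δ : ℝ) (hδ : 0 < δ) (r : ℕ) (hr : 1 ≤ r) :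
    Tendsto (fun s : ℕ =>
        (1 / (s : ℝ)) * ∑ i ∈ Finset.Icc 1 (⌈δ * s * r⌉₊ - 1),
          Real.log (1 + ((s : ℝ) - 1) / (i : ℝ)) / Real.log q)
      atTop
      (nhds (δ * r * (Real.log (1 + 1 / (δ * r)) / Real.log q)
        + Real.log (1 + δ * r) / Real.log q)) := by
  have ha : 0 < δ * r := mul_pos hδ (by exact_mod_cast hr)
  have hs : Tendsto (fun s : ℕ => (s : ℝ)) atTop atTop := tendsto_natCast_atTop_atTop
  have hm : Tendsto (fun s : ℕ => ((s - 1 : ℕ) : ℝ) / s) atTop (𝓝 1) :=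
    (tendsto_natCeil_sub_one_div_atTop.comp hs).congr fun s => by simp
  have hN : Tendsto (fun s : ℕ => ((⌈δ * s * r⌉₊ - 1 : ℕ) : ℝ) / s) atTop (𝓝 (δ * r)) := by
    have h := (tendsto_natCeil_sub_one_div_atTop.comp (hs.const_mul_atTop ha)).mul_const (δ * r)
    rw [one_mul] at h
    refine h.congr' ?_
    filter_upwards [eventually_gt_atTop 0] with s hs
    simp only [Function.comp_apply, mul_right_comm δ _ (r : ℝ)]
    field_simp
  have h_log_one_add_inv : log (1 + 1 / (δ * r)) = log (1 + δ * r) - log (δ * r) := by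
    rw [← log_div (by positivity) ha.ne']
    congr 1
    field_simp
    ring
  convert ((tendsto_log_choose_div hs hm hN one_pos ha).div_const (log q)).congr' _ using 2
  · rw [h_log_one_add_inv]
    simp only [log_one]
    ring
  · filter_upwards [eventually_gt_atTop 0] with s hs
    rw [← Finset.sum_div, ← Nat.cast_pred hs, sum_log_one_add_div_eq_log_choose]
    ring

/-- for `δ > 0` and `r ≥ 1`,
`lim_{s→∞} (1/s)·Σ_{i=1}^{⌈δsr⌉−1} log_q(1 + (s−1)/i)
  = δr·log_q(1 + 1/(δr)) + log_q(1 + δr)`. -/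
theorem stmt_16 (q : ℝ) (hq : 1 < q) (δ : ℝ) (hδ : 0 < δ) (r : ℕ) (hr : 1 ≤ r) :
    Tendsto (fun s : ℕ =>
        (1 / (s : ℝ)) * ∑ i ∈ Finset.Icc 1 (⌈δ * s * r⌉₊ - 1),
          Real.log (1 + ((s : ℝ) - 1) / (i : ℝ)) / Real.log q)
      atTop
      (nhds (δ * r * (Real.log (1 + 1 / (δ * r)) / Real.log q)
        + Real.log (1 + δ * r) / Real.log q)) :=
  stmt_16_general q δ hδ r hr
end
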